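/- Let H be a model graph and let a, b, c, d be positive integers with n = a+b+c+d. There exists a simple undirected graph G on n vertices with exactly Σ_{(p,q) ∈ Full(H)} (#p)·(#q) edges that admits an H-partition with |V_A| = a, |V_B| = b, |V_C| = c, |V_D| = d, where #p denotes the class size corresponding to label p. Moreover, no graph with strictly fewer edges admits such an H-partition with these class sizes. That is, m_min^H(a,b,c,d) = Σ_{(p,q) ∈ Full(H)} (#p)·(#q). -/

import Mathlib

inductive Label : Type
  | A | B | C | D
deriving DecidableEq

instance instFintypeLabel : Fintype Label where
  elems := {Label.A, Label.B, Label.C, Label.D}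
  complete := by intro x; cases x <;> simp

/-- A model graph: an undirected graph on the four labels A,B,C,D, each edge
marked full or dotted (never both), symmetric and irreflexive. -/
structure ModelGraph : Type where
  full : Label → Label → Bool
  dotted : Label → Label → Bool
  full_symm : ∀ p q, full p q = full q p
  dotted_symm : ∀ p q, dotted p q = dotted q p
  full_irrefl : ∀ p, full p p = false
  dotted_irrefl : ∀ p, dotted p p = false
  not_both : ∀ p q, ¬ (full p q = true ∧ dotted p q = true)

/-- `ℓ` is an `H`-partition of `G`: all four classes nonempty, full edges of `H`
force complete adjacency, dotted edges force complete nonadjacency. -/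
def IsHPartition {V : Type} (G : SimpleGraph V) (H : ModelGraph) (ℓ : V → Label) : Prop :=
  (∀ p : Label, ∃ v, ℓ v = p) ∧
  (∀ u v, H.full (ℓ u) (ℓ v) = true → G.Adj u v) ∧
  (∀ u v, H.dotted (ℓ u) (ℓ v) = true → ¬ G.Adj u v)

/-- Label `p` is possible for vertex `v` relative to the partial labeling `pl`. -/
def Possible {V : Type} (G : SimpleGraph V) (H : ModelGraph)
    (pl : V → Option Label) (v : V) (p : Label) : Prop :=
  (∀ q y, H.full p q = true → pl y = some q → G.Adj v y) ∧
  (∀ q y, H.dotted p q = true → pl y = some q → ¬ G.Adj v y)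

/-- Full-edge neighborhood of a set of labels. -/
def NFull (H : ModelGraph) (L : Finset Label) : Finset Label :=
  Finset.univ.filter (fun q => ∃ p ∈ L, H.full p q = true)

/-- Dotted-edge neighborhood of a set of labels. -/
def NDotted (H : ModelGraph) (L : Finset Label) : Finset Label :=
  Finset.univ.filter (fun q => ∃ p ∈ L, H.dotted p q = true)

/-- Class sizes `a,b,c,d` as a function of the label. -/
def cnt (a b c d : ℕ) : Label → ℕ
  | .A => a | .B => b | .C => c | .D => d

/-!
The extremal graph is the blow-up of the full edges of `H`: join `u` and `v` exactly when
`(ℓ u, ℓ v)` is a full edge. Any graph with `H`-partition `ℓ` contains this blow-up, and the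
blow-up is itself `H`-partitioned by `ℓ` since no pair of labels is both full and dotted.
Counting its edges through the degree sum gives the formula.
-/

open Finset

theorem Fintype.sum_comp_eq_sum_ncard_smul {α W M : Type*} [Fintype α] [Fintype W]
    [AddCommMonoid M] (ℓ : W → α) (f : α → M) :
    ∑ v, f (ℓ v) = ∑ p, {v | ℓ v = p}.ncard • f p := by
  classical
  rw [← Fintype.sum_fiberwise' ℓ f]
  simp [Set.ncard_eq_toFinset_card', Fintype.card_subtype]

theorem exists_fin_ncard_fiber_eq {α : Type*} [Fintype α] (s : α → ℕ) {n : ℕ}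
    (hn : n = ∑ p, s p) : ∃ ℓ : Fin n → α, ∀ p, {v | ℓ v = p}.ncard = s p := by
  have e : (Σ p, Fin (s p)) ≃ Fin n := Fintype.equivFinOfCardEq (by simp [hn])
  refine ⟨fun v => (e.symm v).1, fun p => ?_⟩
  have : {v | (e.symm v).1 = p} = e '' Set.range (Sigma.mk p) := by
    ext v; simp
  rw [this, Set.ncard_image_of_injective _ e.injective,
    Set.ncard_range_of_injective sigma_mk_injective, Nat.card_eq_fintype_card, Fintype.card_fin]

theorem Finite.of_forall_ncard_fiber_ne_zero {α W : Type*} [Finite α] (ℓ : W → α)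
    (h : ∀ p, {v | ℓ v = p}.ncard ≠ 0) : Finite W := by
  have hW : (Set.univ : Set W) = ⋃ p, {v | ℓ v = p} := by ext; simp
  exact Set.finite_univ_iff.mp
    (hW ▸ _root_.Set.finite_iUnion fun p => Set.finite_of_ncard_ne_zero (h p))

namespace SimpleGraph

variable {α W : Type*} [Fintype α] (K : SimpleGraph α) [DecidableRel K.Adj]

theorem degree_comap [Fintype W] (ℓ : W → α) (v : W) :
    (K.comap ℓ).degree v = ∑ q, if K.Adj (ℓ v) q then {u | ℓ u = q}.ncard else 0 := by
  classical
  rw [← card_neighborFinset_eq_degree]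
  have : (K.comap ℓ).neighborFinset v = univ.filter fun u => K.Adj (ℓ v) (ℓ u) := by ext; simp
  rw [this, card_filter,
    Fintype.sum_comp_eq_sum_ncard_smul ℓ fun q => if K.Adj (ℓ v) q then 1 else 0]
  simp

theorem two_mul_ncard_edgeSet_comap [Finite W] (ℓ : W → α) :
    2 * (K.comap ℓ).edgeSet.ncard =
      ∑ p, ∑ q, if K.Adj p q then {v | ℓ v = p}.ncard * {v | ℓ v = q}.ncard else 0 := by
  classical
  have := Fintype.ofFinite W
  rw [← coe_edgeFinset, Set.ncard_coe_finset, ← sum_degrees_eq_twice_card_edges]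
  simp only [degree_comap]
  rw [Fintype.sum_comp_eq_sum_ncard_smul ℓ
    fun p => ∑ q, if K.Adj p q then {u | ℓ u = q}.ncard else 0]
  simp only [smul_eq_mul, mul_sum, mul_ite, mul_zero]

end SimpleGraph

namespace ModelGraph

variable (H : ModelGraph)

def fullGraph : SimpleGraph Label where
  Adj p q := H.full p q = true
  symm := ⟨fun p q h => by rwa [H.full_symm]⟩
  loopless := ⟨fun p h => by simp [H.full_irrefl] at h⟩

instance : DecidableRel H.fullGraph.Adj := fun p q =>
  inferInstanceAs (Decidable (H.full p q = true))

variable {W : Type} {ℓ : W → Label}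

theorem isHPartition_comap_fullGraph (hℓ : Function.Surjective ℓ) :
    IsHPartition (H.fullGraph.comap ℓ) H ℓ :=
  ⟨hℓ, fun _ _ h => h, fun u v hd hf => H.not_both (ℓ u) (ℓ v) ⟨hf, hd⟩⟩

theorem comap_fullGraph_le {G : SimpleGraph W} (hG : IsHPartition G H ℓ) :
    H.fullGraph.comap ℓ ≤ G :=
  fun u v h => hG.2.1 u v h

theorem ncard_edgeSet_comap_fullGraph [Finite W] {s : Label → ℕ}
    (hℓ : ∀ p, {v | ℓ v = p}.ncard = s p) :
    (H.fullGraph.comap ℓ).edgeSet.ncard =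
      (∑ p, ∑ q, if H.full p q = true then s p * s q else 0) / 2 := by
  have := SimpleGraph.two_mul_ncard_edgeSet_comap H.fullGraph ℓ
  simp only [hℓ] at this
  change _ = (∑ p, ∑ q, if H.fullGraph.Adj p q then s p * s q else 0) / 2
  omega

end ModelGraph

theorem sum_cnt (a b c d : ℕ) : ∑ p, cnt a b c d p = a + b + c + d := by
  simp [Finset.univ, Fintype.elems, cnt, add_assoc]

theorem cnt_ne_zero {a b c d : ℕ} (ha : 0 < a) (hb : 0 < b) (hc : 0 < c) (hd : 0 < d)
    (p : Label) : cnt a b c d p ≠ 0 := by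
  cases p <;> simp only [cnt] <;> omega

/-- m_min^H(a,b,c,d) equals the sum over full edges of H of the
products of the class sizes (each unordered full edge counted once, hence the
division of the ordered-pair sum by 2). -/
theorem stmt_3 (H : ModelGraph) (a b c d : ℕ)
    (ha : 0 < a) (hb : 0 < b) (hc : 0 < c) (hd : 0 < d)
    (n : ℕ) (hn : n = a + b + c + d) :
    (∃ (G : SimpleGraph (Fin n)) (ℓ : Fin n → Label),
        IsHPartition G H ℓ ∧ (∀ p : Label, {v | ℓ v = p}.ncard = cnt a b c d p) ∧
        G.edgeSet.ncard =
          (∑ p : Label, ∑ q : Label,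
            if H.full p q = true then cnt a b c d p * cnt a b c d q else 0) / 2) ∧
    (∀ (W : Type) (G : SimpleGraph W) (ℓ : W → Label),
        IsHPartition G H ℓ → (∀ p : Label, {v | ℓ v = p}.ncard = cnt a b c d p) →
        (∑ p : Label, ∑ q : Label,
            if H.full p q = true then cnt a b c d p * cnt a b c d q else 0) / 2
          ≤ G.edgeSet.ncard) := by
  have hcnt := cnt_ne_zero ha hb hc hd
  constructor
  · obtain ⟨ℓ, hℓ⟩ :=
      exists_fin_ncard_fiber_eq (cnt a b c d) (hn.trans (sum_cnt a b c d).symm)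
    have hsurj : Function.Surjective ℓ := fun p =>
      Set.nonempty_of_ncard_ne_zero ((hℓ p).trans_ne (hcnt p))
    exact ⟨_, ℓ, H.isHPartition_comap_fullGraph hsurj, hℓ,
      H.ncard_edgeSet_comap_fullGraph hℓ⟩
  · intro W G ℓ hG hℓ
    have := Finite.of_forall_ncard_fiber_ne_zero ℓ fun p => (hℓ p).trans_ne (hcnt p)
    rw [← H.ncard_edgeSet_comap_fullGraph hℓ]
    exact Set.ncard_le_ncard (SimpleGraph.edgeSet_mono (H.comap_fullGraph_le hG))
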